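/- The system ⟨R_0, T_D⟩ is based on atomic entailment: for all propositional formulas φ, ψ, the formula φ → ψ belongs to Cn_0(R_0, T_D) if and only if ψ results atomically from φ on the ground of ⟨R_0, T_D⟩, i.e. if and only if, with L = Cn_0(R_0, T_D), both: (1) for every substitution e, h^e(φ) ∈ L implies h^e(ψ) ∈ L and P_0(h^e(φ)) ⊆ P_0(h^e(ψ)); and (2) for every substitution e, h^e((∼ψ → ∼φ) → ∼φ) ∈ L implies h^e(∼φ) ∈ L and P_0(h^e(∼ψ)) ⊆ P_0(h^e(∼φ)). -/

import Mathlib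

/-- Propositional formulas built from propositional variables (indexed by `ℕ`)
using →, ∼, ∨, ∧, ≡. -/
inductive PropForm : Type
  | var : ℕ → PropForm
  | neg : PropForm → PropForm
  | imp : PropForm → PropForm → PropForm
  | disj : PropForm → PropForm → PropForm
  | conj : PropForm → PropForm → PropForm
  | equiv : PropForm → PropForm → PropForm

/-- The implication table of the matrix 𝔐_D. -/
def fimp : Fin 3 → Fin 3 → Fin 3 := ![![1, 1, 1], ![0, 1, 0], ![0, 1, 2]]
/-- The negation table of the matrix 𝔐_D. -/
def fneg : Fin 3 → Fin 3 := ![1, 0, 2]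
/-- The disjunction table of the matrix 𝔐_D. -/
def fdisj : Fin 3 → Fin 3 → Fin 3 := ![![0, 1, 0], ![1, 1, 1], ![0, 1, 2]]
/-- The conjunction table of the matrix 𝔐_D. -/
def fconj : Fin 3 → Fin 3 → Fin 3 := ![![0, 0, 0], ![0, 1, 1], ![0, 1, 2]]
/-- The equivalence table of the matrix 𝔐_D. -/
def fequiv : Fin 3 → Fin 3 → Fin 3 := ![![1, 0, 0], ![0, 1, 0], ![0, 0, 2]]

/-- Value of a propositional formula in the matrix 𝔐_D under a valuation `v`. -/
def evalD (v : ℕ → Fin 3) : PropForm → Fin 3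
  | .var n => v n
  | .neg φ => fneg (evalD v φ)
  | .imp φ ψ => fimp (evalD v φ) (evalD v ψ)
  | .disj φ ψ => fdisj (evalD v φ) (evalD v ψ)
  | .conj φ ψ => fconj (evalD v φ) (evalD v ψ)
  | .equiv φ ψ => fequiv (evalD v φ) (evalD v ψ)

/-- T_D : the set of propositional formulas valid in 𝔐_D
(every valuation gives a designated value, i.e. 1 or 2). -/
def TD : Set PropForm := {φ | ∀ v : ℕ → Fin 3, evalD v φ = 1 ∨ evalD v φ = 2}
/-- P_0(φ) : the set of propositional variables occurring in `φ`. -/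
def PropForm.vars : PropForm → Set ℕ
  | .var n => {n}
  | .neg φ => φ.vars
  | .imp φ ψ => φ.vars ∪ ψ.vars
  | .disj φ ψ => φ.vars ∪ ψ.vars
  | .conj φ ψ => φ.vars ∪ ψ.vars
  | .equiv φ ψ => φ.vars ∪ ψ.vars
/-- h^e : the endomorphism of the set of propositional formulas induced by a
substitution `e` of formulas for propositional variables. -/
def substP (e : ℕ → PropForm) : PropForm → PropForm
  | .var n => e n
  | .neg φ => .neg (substP e φ)
  | .imp φ ψ => .imp (substP e φ) (substP e ψ)
  | .disj φ ψ => .disj (substP e φ) (substP e ψ)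
  | .conj φ ψ => .conj (substP e φ) (substP e ψ)
  | .equiv φ ψ => .equiv (substP e φ) (substP e ψ)

/-- Cn_0(R_0, X) : the smallest set of propositional formulas containing `X` and
closed under modus ponens (r_0^0). -/
inductive Cn0 (X : Set PropForm) : PropForm → Prop
  | base {φ : PropForm} : φ ∈ X → Cn0 X φ
  | mp {φ ψ : PropForm} : Cn0 X (.imp φ ψ) → Cn0 X φ → Cn0 X ψ

/-!
Since `T_D` is closed under modus ponens and substitution, `Cn_0(R_0, T_D) = T_D`, and
everything reduces to the tables of `𝔐_D`. The value `2` is infectious: a formula takes the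
value `2` exactly when all its variables do, so `P_0(φ) ⊆ P_0(ψ)` says precisely that `ψ = 2`
forces `φ = 2`. With this, both conditions follow from the validity of `φ → ψ` by inspecting
the tables.

Conversely, let `v` refute `φ → ψ`. Substitute for a variable `n` with `v n = 2` a formula in
`p₀` that is `2` if `p₀ = 2` and `0` otherwise, and for `v n ∈ {0, 1}` a formula in `p₀, p₁`
that is `2` if `p₀ = p₁ = 2` and `v n` otherwise. A valuation of `p₀, p₁` then induces on the
original variables either `v` itself, or the classical valuation `v°` (`v` with `2` replaced
by `0`), or the constant `2`; so an instance is valid as soon as the formula is designated at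
`v` and `v°`. If `φ` is `1` at `v°`, the instance of `φ` is valid and condition (1) fails at
`v`; otherwise `φ` is `0` at `v°`, the instance of `(∼ψ → ∼φ) → ∼φ` is valid and condition (2)
fails at `v`.
-/

theorem cn0_iff_mem {X : Set PropForm}
    (hX : ∀ {φ ψ : PropForm}, .imp φ ψ ∈ X → φ ∈ X → ψ ∈ X) {φ : PropForm} :
    Cn0 X φ ↔ φ ∈ X := by
  refine ⟨fun h => ?_, Cn0.base⟩
  induction h with
  | base h => exact h
  | mp _ _ ihImp ih => exact hX ihImp ih

theorem mem_TD_iff {φ : PropForm} : φ ∈ TD ↔ ∀ v, evalD v φ ≠ 0 :=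
  forall_congr' fun v => (by decide : ∀ x : Fin 3, (x = 1 ∨ x = 2) ↔ x ≠ 0) _

theorem mp_mem_TD {φ ψ : PropForm} (himp : .imp φ ψ ∈ TD) (hφ : φ ∈ TD) : ψ ∈ TD := by
  rw [mem_TD_iff] at *
  exact fun v => (by decide : ∀ a b : Fin 3, fimp a b ≠ 0 → a ≠ 0 → b ≠ 0) _ _ (himp v) (hφ v)

theorem cn0_TD_iff {φ : PropForm} : Cn0 TD φ ↔ φ ∈ TD :=
  cn0_iff_mem mp_mem_TD

theorem evalD_substP (v : ℕ → Fin 3) (e : ℕ → PropForm) (f : PropForm) :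
    evalD v (substP e f) = evalD (fun n => evalD v (e n)) f := by
  induction f <;> simp only [substP, evalD, *]

theorem substP_mem_TD (e : ℕ → PropForm) {f : PropForm} (hf : f ∈ TD) : substP e f ∈ TD :=
  fun v => evalD_substP v e f ▸ hf _

theorem fneg_eq_two_iff (a : Fin 3) : fneg a = 2 ↔ a = 2 := by decide +revert

theorem fimp_eq_two_iff (a b : Fin 3) : fimp a b = 2 ↔ a = 2 ∧ b = 2 := by decide +revert

theorem fdisj_eq_two_iff (a b : Fin 3) : fdisj a b = 2 ↔ a = 2 ∧ b = 2 := by decide +revert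

theorem fconj_eq_two_iff (a b : Fin 3) : fconj a b = 2 ↔ a = 2 ∧ b = 2 := by decide +revert

theorem fequiv_eq_two_iff (a b : Fin 3) : fequiv a b = 2 ↔ a = 2 ∧ b = 2 := by decide +revert

theorem evalD_eq_two_iff (v : ℕ → Fin 3) (f : PropForm) :
    evalD v f = 2 ↔ ∀ n ∈ f.vars, v n = 2 := by
  induction f with
  | var n => simp [evalD, PropForm.vars]
  | neg f ih => rw [evalD, fneg_eq_two_iff, ih, PropForm.vars]
  | imp f g ihf ihg =>
    simp only [evalD, fimp_eq_two_iff, ihf, ihg, PropForm.vars, Set.mem_union, or_imp,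
      forall_and]
  | disj f g ihf ihg =>
    simp only [evalD, fdisj_eq_two_iff, ihf, ihg, PropForm.vars, Set.mem_union, or_imp,
      forall_and]
  | conj f g ihf ihg =>
    simp only [evalD, fconj_eq_two_iff, ihf, ihg, PropForm.vars, Set.mem_union, or_imp,
      forall_and]
  | equiv f g ihf ihg =>
    simp only [evalD, fequiv_eq_two_iff, ihf, ihg, PropForm.vars, Set.mem_union, or_imp,
      forall_and]

theorem PropForm.vars_nonempty (f : PropForm) : f.vars.Nonempty := by
  induction f with
  | var n => exact Set.singleton_nonempty n
  | neg _ ih => exact ih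
  | imp _ _ ih _ | disj _ _ ih _ | conj _ _ ih _ | equiv _ _ ih _ => exact ih.inl

theorem evalD_ne_two {v : ℕ → Fin 3} (hv : ∀ n, v n ≠ 2) (f : PropForm) : evalD v f ≠ 2 := by
  obtain ⟨n, hn⟩ := f.vars_nonempty
  exact fun h => hv n ((evalD_eq_two_iff v f).1 h n hn)

theorem vars_subset_iff {f g : PropForm} :
    f.vars ⊆ g.vars ↔ ∀ v, evalD v g = 2 → evalD v f = 2 := by
  simp only [evalD_eq_two_iff]
  refine ⟨fun h v hg n hn => hg n (h hn), fun h m hm => ?_⟩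
  by_contra hmg
  have := h (fun n => if n = m then 0 else 2) (fun n hn => if_neg (ne_of_mem_of_not_mem hn hmg))
    m hm
  simp at this

theorem mem_TD_and_vars_subset_of_imp_mem_TD {φ ψ : PropForm} (himp : .imp φ ψ ∈ TD)
    (hφ : φ ∈ TD) : ψ ∈ TD ∧ φ.vars ⊆ ψ.vars := by
  refine ⟨mp_mem_TD himp hφ, vars_subset_iff.2 fun v hψ => ?_⟩
  rw [mem_TD_iff] at himp hφ
  have himp := himp v
  simp only [evalD, hψ] at himp
  exact (by decide : ∀ a : Fin 3, fimp a 2 ≠ 0 → a ≠ 0 → a = 2) _ himp (hφ v)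

theorem neg_mem_TD_and_vars_subset_of_imp_mem_TD {φ ψ : PropForm} (himp : .imp φ ψ ∈ TD)
    (hX : .imp (.imp (.neg ψ) (.neg φ)) (.neg φ) ∈ TD) :
    PropForm.neg φ ∈ TD ∧ (PropForm.neg ψ).vars ⊆ (PropForm.neg φ).vars := by
  rw [mem_TD_iff] at *
  refine ⟨fun v => ?_, vars_subset_iff.2 fun v hφ => ?_⟩
  · have himp := himp v
    have hX := hX v
    simp only [evalD] at himp hX ⊢
    exact (by decide : ∀ a b : Fin 3, fimp a b ≠ 0 →
      fimp (fimp (fneg b) (fneg a)) (fneg a) ≠ 0 → fneg a ≠ 0) _ _ himp hX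
  · have himp := himp v
    have hX := hX v
    simp only [evalD] at himp hX hφ ⊢
    rw [fneg_eq_two_iff] at hφ ⊢
    rw [hφ] at himp hX
    exact (by decide : ∀ b : Fin 3, fimp 2 b ≠ 0 →
      fimp (fimp (fneg b) (fneg 2)) (fneg 2) ≠ 0 → b = 2) _ himp hX

section PinSubst

def pin (x : Fin 3) (f : PropForm) : PropForm :=
  if x = 0 then .neg (.imp f f) else .imp f f

theorem evalD_pin {x : Fin 3} (hx : x ≠ 2) (w : ℕ → Fin 3) (f : PropForm) :
    evalD w (pin x f) = if evalD w f = 2 then 2 else x := by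
  have h := (by decide : ∀ x a : Fin 3, x ≠ 2 →
    (if x = 0 then fneg (fimp a a) else fimp a a) = if a = 2 then 2 else x) x (evalD w f) hx
  unfold pin
  split_ifs at h ⊢ <;> exact h

def replaceTwoByZero (v : ℕ → Fin 3) : ℕ → Fin 3 := fun n => if v n = 2 then 0 else v n

def pinSubst (v : ℕ → Fin 3) (n : ℕ) : PropForm :=
  if v n = 2 then pin 0 (.var 0) else pin (v n) (.conj (.var 0) (.var 1))

variable {v w : ℕ → Fin 3}

theorem evalD_pinSubst_of_ne_two (hw₀ : w 0 ≠ 2) (n : ℕ) :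
    evalD w (pinSubst v n) = replaceTwoByZero v n := by
  unfold pinSubst replaceTwoByZero
  split_ifs with hv
  · simp [evalD_pin, evalD, hw₀]
  · simp [evalD_pin hv, evalD_eq_two_iff, PropForm.vars, hw₀]

theorem evalD_pinSubst_of_eq_two_of_ne_two (hw₀ : w 0 = 2) (hw₁ : w 1 ≠ 2) (n : ℕ) :
    evalD w (pinSubst v n) = v n := by
  unfold pinSubst
  split_ifs with hv
  · simp [evalD_pin, evalD, hw₀, hv]
  · simp [evalD_pin hv, evalD_eq_two_iff, PropForm.vars, hw₁]

theorem evalD_pinSubst_of_eq_two_of_eq_two (hw₀ : w 0 = 2) (hw₁ : w 1 = 2) (n : ℕ) :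
    evalD w (pinSubst v n) = 2 := by
  unfold pinSubst
  split_ifs with hv
  · simp [evalD_pin, evalD, hw₀]
  · simp [evalD_pin hv, evalD_eq_two_iff, PropForm.vars, hw₀, hw₁]

theorem exists_evalD_substP_pinSubst (v : ℕ → Fin 3) :
    ∃ w, ∀ f, evalD w (substP (pinSubst v) f) = evalD v f :=
  ⟨fun n => if n = 1 then 0 else 2, fun f => by
    rw [evalD_substP]
    exact congrArg (evalD · f) (funext (evalD_pinSubst_of_eq_two_of_ne_two rfl (by decide)))⟩

theorem substP_pinSubst_mem_TD {f : PropForm} (hlow : evalD (replaceTwoByZero v) f ≠ 0)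
    (hmid : evalD v f ≠ 0) : substP (pinSubst v) f ∈ TD := by
  refine mem_TD_iff.2 fun w => ?_
  rw [evalD_substP]
  by_cases hw₀ : w 0 = 2
  · by_cases hw₁ : w 1 = 2
    · rw [(evalD_eq_two_iff _ f).2 fun n _ => evalD_pinSubst_of_eq_two_of_eq_two hw₀ hw₁ n]
      decide
    · rwa [funext (evalD_pinSubst_of_eq_two_of_ne_two hw₀ hw₁)]
  · rwa [funext (evalD_pinSubst_of_ne_two hw₀)]

end PinSubst

theorem imp_mem_TD_of_atomic {φ ψ : PropForm}
    (h₁ : ∀ e, substP e φ ∈ TD → substP e ψ ∈ TD ∧ (substP e φ).vars ⊆ (substP e ψ).vars)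
    (h₂ : ∀ e, substP e (.imp (.imp (.neg ψ) (.neg φ)) (.neg φ)) ∈ TD →
      substP e (.neg φ) ∈ TD ∧ (substP e (.neg ψ)).vars ⊆ (substP e (.neg φ)).vars) :
    .imp φ ψ ∈ TD := by
  refine mem_TD_iff.2 fun v hv => ?_
  simp only [evalD] at hv
  obtain ⟨w, hw⟩ := exists_evalD_substP_pinSubst v
  have hclassical : evalD (replaceTwoByZero v) φ ≠ 2 :=
    evalD_ne_two (fun n => by unfold replaceTwoByZero; split_ifs with h; exacts [by decide, h]) φ
  rcases (by decide : ∀ a : Fin 3, a ≠ 2 → a = 0 ∨ a = 1) _ hclassical with hzero | hone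
  · obtain ⟨hnegφ, hvars⟩ := h₂ (pinSubst v) <| substP_pinSubst_mem_TD
      (by simp only [evalD, hzero]; exact (by decide : ∀ b : Fin 3,
        fimp (fimp (fneg b) (fneg 0)) (fneg 0) ≠ 0) _)
      (by simp only [evalD]; exact (by decide : ∀ a b : Fin 3, fimp a b = 0 →
        fimp (fimp (fneg b) (fneg a)) (fneg a) ≠ 0) _ _ hv)
    have hnegφ := mem_TD_iff.1 hnegφ w
    have hvars := vars_subset_iff.1 hvars w
    simp only [hw, evalD, fneg_eq_two_iff] at hnegφ hvars
    exact (by decide : ∀ a b : Fin 3, fimp a b = 0 → fneg a ≠ 0 → (a = 2 → b = 2) → False)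
      _ _ hv hnegφ hvars
  · obtain ⟨hψ, hvars⟩ := h₁ (pinSubst v) <| substP_pinSubst_mem_TD
      (by rw [hone]; decide)
      ((by decide : ∀ a b : Fin 3, fimp a b = 0 → a ≠ 0) _ _ hv)
    have hψ := mem_TD_iff.1 hψ w
    have hvars := vars_subset_iff.1 hvars w
    simp only [hw] at hψ hvars
    exact (by decide : ∀ a b : Fin 3, fimp a b = 0 → b ≠ 0 → (b = 2 → a = 2) → False)
      _ _ hv hψ hvars

/-- the system ⟨R_0, T_D⟩ is based on atomic entailment: with
L = Cn_0(R_0, T_D), for all propositional formulas φ, ψ, the formula φ → ψ belongs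
to L iff (1) for every substitution e, h^e(φ) ∈ L implies h^e(ψ) ∈ L and
P_0(h^e(φ)) ⊆ P_0(h^e(ψ)); and (2) for every substitution e,
h^e((∼ψ → ∼φ) → ∼φ) ∈ L implies h^e(∼φ) ∈ L and P_0(h^e(∼ψ)) ⊆ P_0(h^e(∼φ)). -/
theorem system_R0_TD_based_on_atomic_entailment (φ ψ : PropForm) :
    Cn0 TD (.imp φ ψ) ↔
      ((∀ e : ℕ → PropForm, Cn0 TD (substP e φ) →
          Cn0 TD (substP e ψ) ∧ (substP e φ).vars ⊆ (substP e ψ).vars) ∧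
       (∀ e : ℕ → PropForm,
          Cn0 TD (substP e (.imp (.imp (.neg ψ) (.neg φ)) (.neg φ))) →
            Cn0 TD (substP e (.neg φ)) ∧
              (substP e (.neg ψ)).vars ⊆ (substP e (.neg φ)).vars)) := by
  simp only [cn0_TD_iff]
  refine ⟨fun h => ⟨fun e hφ => ?_, fun e hX => ?_⟩, fun ⟨h₁, h₂⟩ => imp_mem_TD_of_atomic h₁ h₂⟩
  · exact mem_TD_and_vars_subset_of_imp_mem_TD (substP_mem_TD e h) hφ
  · exact neg_mem_TD_and_vars_subset_of_imp_mem_TD (substP_mem_TD e h) hX
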